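/- Let β ≥ 6 and D = 2^{β−3}. Define b̄ = −b + b(b−1)Dε₁ in ℤ_{2^β}, where ε₁ = ±1. Then for all b ∈ ℤ_{2^β}: (i) b̄D = −bD, (ii) (b + 2tD)‾ = b̄ − 2tD for all integers t, and (iii) b̄̄ = b(1 + 2Dε₁). -/
import Mathlib


/-- The map `b ↦ b̄ = -b + b(b-1)·D·ε₁` on `ℤ_{2^β}`, with `D = 2^(β-3)`. -/
def barMap2 (β : ℕ) (ε1 : ℤ) (b : ZMod (2 ^ β)) : ZMod (2 ^ β) :=
  -b + b * (b - 1) * ((2 : ZMod (2 ^ β)) ^ (β - 3)) * (ε1 : ZMod (2 ^ β))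

theorem stmt_16 (β : ℕ) (hβ : 6 ≤ β) (ε1 : ℤ) (hε1 : ε1 = 1 ∨ ε1 = -1) :
    ∀ b : ZMod (2 ^ β),
      (barMap2 β ε1 b * (2 : ZMod (2 ^ β)) ^ (β - 3) =
        -(b * (2 : ZMod (2 ^ β)) ^ (β - 3))) ∧
      (∀ t : ℤ, barMap2 β ε1 (b + 2 * t * (2 : ZMod (2 ^ β)) ^ (β - 3)) =
        barMap2 β ε1 b - 2 * t * (2 : ZMod (2 ^ β)) ^ (β - 3)) ∧
      (barMap2 β ε1 (barMap2 β ε1 b) =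
        b * (1 + 2 * (2 : ZMod (2 ^ β)) ^ (β - 3) * (ε1 : ZMod (2 ^ β)))) := by
  intro b
  set D : ZMod (2 ^ β) := (2 : ZMod (2 ^ β)) ^ (β - 3) with hD
  have hpow : ((2 : ZMod (2 ^ β)) : ZMod (2 ^ β)) ^ β = 0 := by
    have : ((2 ^ β : ℕ) : ZMod (2 ^ β)) = 0 := ZMod.natCast_self _
    push_cast at this
    exact this
  have hD2 : D * D = 0 := by
    rw [hD, ← pow_add]
    have h : (β - 3) + (β - 3) = β + (β - 6) := by omega
    rw [h, pow_add, hpow, zero_mul]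
  set e : ZMod (2 ^ β) := (ε1 : ZMod (2 ^ β)) with he
  refine ⟨?_, ?_, ?_⟩
  · simp only [barMap2, ← hD, ← he]
    linear_combination (b * (b - 1) * e) * hD2
  · intro t
    simp only [barMap2, ← hD, ← he]
    linear_combination ((2 * (t : ZMod (2 ^ β)) * (2 * b - 1) + 4 * (t : ZMod (2 ^ β)) ^ 2 * D) * e) * hD2
  · simp only [barMap2, ← hD, ← he]
    linear_combination (-(b * (b - 1) * e * (2 * b + 1) * e) + (b * (b - 1) * e) ^ 2 * D * e) * hD2
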